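/- For every positive integer k and every complex number q with |q| < 1 (with 1+q^j ≠ 0 for the relevant j), the rational function Pbar_k defined by Pbar_1(q) = 1 and Pbar_k(q) = ((q^{k-1} - 1) Pbar_{k-1}(q) + q^{k-1}(1+q)) / (1+q^k) for k > 1 admits the closed form: Pbar_k(q) = q^{k-1}(1+q)/(1+q^k) − ((q;q)_{k-1} / (-q^2;q)_{k-1}) · sum over j from 0 to k−2 of (-1)^j q^{k-j-2} (-q;q)_{k-j-2} / (q;q)_{k-j-2}. -/

import Mathlib

open scoped BigOperators

/-- The finite q-Pochhammer symbol `(a; q)_N = ∏_{j=0}^{N-1} (1 - a q^j)`. -/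
noncomputable def qPoch (a q : ℂ) (N : ℕ) : ℂ := ∏ j ∈ Finset.range N, (1 - a * q ^ j)

/-- The infinite q-Pochhammer symbol `(a; q)_∞ = ∏_{j=0}^{∞} (1 - a q^j)`. -/
noncomputable def qPochInf (a q : ℂ) : ℂ := ∏' j : ℕ, (1 - a * q ^ j)

/-- An overpartition of `n`: a multiset of positive non-overlined parts together with a
finset of positive overlined parts (the overlined parts are distinct), with total sum `n`. -/
structure Overpartition (n : ℕ) where
  parts : Multiset ℕ
  overlined : Finset ℕ
  parts_pos : ∀ x ∈ parts, 0 < x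
  overlined_pos : ∀ x ∈ overlined, 0 < x
  sum_eq : parts.sum + ∑ x ∈ overlined, x = n

/-- `s` is the smallest non-overlined part of `π`, it appears exactly `k` times among the
non-overlined parts, and every overlined part is greater than `s`. -/
def SptbarCond (k : ℕ) {n : ℕ} (π : Overpartition n) (s : ℕ) : Prop :=
  s ∈ π.parts ∧ (∀ x ∈ π.parts, s ≤ x) ∧ π.parts.count s = k ∧ ∀ x ∈ π.overlined, s < x

/-- `SptbarCond` together with: every part other than `s` is incongruent to `s` modulo 2. -/
def SptbarOCond (k : ℕ) {n : ℕ} (π : Overpartition n) (s : ℕ) : Prop :=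
  SptbarCond k π s ∧ (∀ x ∈ π.parts, x ≠ s → x % 2 ≠ s % 2) ∧
    ∀ x ∈ π.overlined, x % 2 ≠ s % 2

/-- The number of parts of `π` that are greater than `s`. -/
def numGreater {n : ℕ} (π : Overpartition n) (s : ℕ) : ℕ :=
  (π.parts.filter (fun x => s < x)).card + π.overlined.card

/-- The total number of parts of the overpartition `π`. -/
def numParts {n : ℕ} (π : Overpartition n) : ℕ :=
  π.parts.card + π.overlined.card

/-- `sptbar k n`: the number of overpartitions of `n` whose smallest non-overlined part `s`
appears exactly `k` times and all of whose overlined parts are greater than `s`. -/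
noncomputable def sptbar (k n : ℕ) : ℕ :=
  Nat.card {π : Overpartition n // ∃ s, SptbarCond k π s}

/-- `sptbar' k n = a_e(k,n) - a_o(k,n)`. -/
noncomputable def sptbar' (k n : ℕ) : ℤ :=
  (Nat.card {π : Overpartition n // ∃ s, SptbarCond k π s ∧ Even (numGreater π s)} : ℤ) -
    (Nat.card {π : Overpartition n // ∃ s, SptbarCond k π s ∧ Odd (numGreater π s)} : ℤ)

/-- `sptbarO k n`: as `sptbar k n`, with all parts other than the smallest non-overlined part
incongruent to it modulo 2. -/
noncomputable def sptbarO (k n : ℕ) : ℕ :=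
  Nat.card {π : Overpartition n // ∃ s, SptbarOCond k π s}

/-- `sptbarO' k n = b_e(k,n) - b_o(k,n)`. -/
noncomputable def sptbarO' (k n : ℕ) : ℤ :=
  (Nat.card {π : Overpartition n // ∃ s, SptbarOCond k π s ∧ Even (numGreater π s)} : ℤ) -
    (Nat.card {π : Overpartition n // ∃ s, SptbarOCond k π s ∧ Odd (numGreater π s)} : ℤ)

/-- The number of overpartitions of `n` into even parts. -/
noncomputable def pbarE (n : ℕ) : ℕ :=
  Nat.card {π : Overpartition n // (∀ x ∈ π.parts, Even x) ∧ ∀ x ∈ π.overlined, Even x}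

/-- The number of overpartitions of `n` into odd parts with no non-overlined part equal to 1. -/
noncomputable def pbarOex (n : ℕ) : ℕ :=
  Nat.card {π : Overpartition n //
    (∀ x ∈ π.parts, Odd x) ∧ (∀ x ∈ π.overlined, Odd x) ∧ (1 : ℕ) ∉ π.parts}

/-- Among overpartitions of `n` into odd parts with no non-overlined 1's: the number of those
with an even number of parts minus the number of those with an odd number of parts. -/
noncomputable def pbarOex' (n : ℕ) : ℤ :=
  (Nat.card {π : Overpartition n // ((∀ x ∈ π.parts, Odd x) ∧ (∀ x ∈ π.overlined, Odd x) ∧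
      (1 : ℕ) ∉ π.parts) ∧ Even (numParts π)} : ℤ) -
    (Nat.card {π : Overpartition n // ((∀ x ∈ π.parts, Odd x) ∧ (∀ x ∈ π.overlined, Odd x) ∧
      (1 : ℕ) ∉ π.parts) ∧ Odd (numParts π)} : ℤ)

/-- `sptkd k n`: the number of partitions of `n` whose smallest part appears exactly `k`
times and all of whose remaining parts are distinct. -/
noncomputable def sptkd (k n : ℕ) : ℕ :=
  Nat.card {m : Multiset ℕ // (∀ x ∈ m, 0 < x) ∧ m.sum = n ∧
    ∃ s, s ∈ m ∧ (∀ x ∈ m, s ≤ x) ∧ m.count s = k ∧ ∀ x ∈ m, x ≠ s → m.count x = 1}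

/-- `Pbar q k`: `Pbar q 1 = 1` and
`Pbar q k = ((q^(k-1) - 1) * Pbar q (k-1) + q^(k-1)*(1+q)) / (1 + q^k)` for `k > 1`. -/
noncomputable def Pbar (q : ℂ) : ℕ → ℂ
  | 0 => 0
  | 1 => 1
  | (k + 2) => ((q ^ (k + 1) - 1) * Pbar q (k + 1) + q ^ (k + 1) * (1 + q)) / (1 + q ^ (k + 2))

/-!
Write `t m = q^m (-q;q)_m / (q;q)_m`. Since `(-q;q)_m (1 + q^(m+1)) = (1 + q) (-q^2;q)_m`, the first
term of the closed form is `c (k-1) * t (k-1)` with `c m = (q;q)_m / (-q^2;q)_m`, so the claim reads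
`Pbar q (n+1) = c n * ∑_{j ≤ n} (-1)^j t (n-j)`. The ratio `c (n+1) / c n = (1 - q^(n+1)) / (1 + q^(n+2))`
is exactly the coefficient in the recursion for `Pbar`, and the alternating sum
`A n = ∑_{j ≤ n} (-1)^j t (n-j)` satisfies `A (n+1) = t (n+1) - A n`, which matches the inhomogeneous term `c (n+1) * t (n+1)`.
-/

lemma pow_ne_of_norm_lt_one {𝕜 : Type*} [NormedDivisionRing 𝕜] {q z : 𝕜} (hq : ‖q‖ < 1)
    (hz : ‖z‖ = 1) {m : ℕ} (hm : m ≠ 0) : q ^ m ≠ z := by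
  intro h
  have hlt := pow_lt_one₀ (norm_nonneg q) hq hm
  rw [← norm_pow, h, hz] at hlt
  exact lt_irrefl _ hlt

lemma one_add_pow_ne_zero {𝕜 : Type*} [NormedDivisionRing 𝕜] {q : 𝕜} (hq : ‖q‖ < 1) {m : ℕ}
    (hm : m ≠ 0) : 1 + q ^ m ≠ 0 := fun h =>
  pow_ne_of_norm_lt_one hq (by rw [norm_neg, norm_one]) hm (eq_neg_of_add_eq_zero_right h)

lemma Finset.sum_range_succ_neg_one_pow_mul_sub {R : Type*} [CommRing R] (f : ℕ → R) (n : ℕ) :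
    ∑ j ∈ Finset.range (n + 1), (-1) ^ j * f (n - j) =
      f n - ∑ j ∈ Finset.range n, (-1) ^ j * f (n - 1 - j) := by
  rw [Finset.sum_range_succ', sub_eq_neg_add, ← Finset.sum_neg_distrib]
  congr 1
  · refine Finset.sum_congr rfl fun j _ => ?_
    rw [pow_succ, show n - (j + 1) = n - 1 - j by omega]
    ring
  · simp

namespace qPoch

variable {q : ℂ}

lemma succ (a : ℂ) (N : ℕ) : qPoch a q (N + 1) = qPoch a q N * (1 - a * q ^ N) :=
  Finset.prod_range_succ _ N

lemma succ' (a : ℂ) (N : ℕ) : qPoch a q (N + 1) = (1 - a) * qPoch (a * q) q N := by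
  rw [qPoch, qPoch, Finset.prod_range_succ', mul_comm]
  simp only [pow_succ, pow_zero, mul_one, mul_assoc, mul_comm q]

lemma neg_self_mul_one_add_pow (N : ℕ) :
    qPoch (-q) q N * (1 + q ^ (N + 1)) = (1 + q) * qPoch (-q ^ 2) q N := by
  have h := (succ (q := q) (-q) N).symm.trans (succ' (-q) N)
  rw [show -q * q = -q ^ 2 by ring] at h
  linear_combination h

lemma self_ne_zero (hq : ‖q‖ < 1) (N : ℕ) : qPoch q q N ≠ 0 :=
  Finset.prod_ne_zero_iff.2 fun j _ => by
    rw [← pow_succ', sub_ne_zero]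
    exact (pow_ne_of_norm_lt_one hq norm_one j.succ_ne_zero).symm

lemma neg_sq_ne_zero (hq : ‖q‖ < 1) (N : ℕ) : qPoch (-q ^ 2) q N ≠ 0 :=
  Finset.prod_ne_zero_iff.2 fun j _ => by
    rw [neg_mul, ← pow_add, sub_neg_eq_add]
    exact one_add_pow_ne_zero hq (by omega)

end qPoch

noncomputable def pbarTerm (q : ℂ) (m : ℕ) : ℂ := q ^ m * (qPoch (-q) q m / qPoch q q m)

lemma qPoch_div_mul_pbarTerm {q : ℂ} (hq : ‖q‖ < 1) (m : ℕ) :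
    qPoch q q m / qPoch (-q ^ 2) q m * pbarTerm q m = q ^ m * (1 + q) / (1 + q ^ (m + 1)) := by
  have hc := qPoch.self_ne_zero hq m
  have hd := qPoch.neg_sq_ne_zero hq m
  have he := one_add_pow_ne_zero hq m.succ_ne_zero
  rw [pbarTerm]
  field_simp
  linear_combination q ^ m * qPoch.neg_self_mul_one_add_pow (q := q) m

lemma Pbar_succ_eq_qPoch_div_mul {q : ℂ} (hq : ‖q‖ < 1) : ∀ n : ℕ,
    Pbar q (n + 1) = qPoch q q n / qPoch (-q ^ 2) q n *
      (pbarTerm q n - ∑ j ∈ Finset.range n, (-1) ^ j * pbarTerm q (n - 1 - j))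
  | 0 => by simp [Pbar, pbarTerm, qPoch]
  | n + 1 => by
    have hc : qPoch q q (n + 1) / qPoch (-q ^ 2) q (n + 1) =
        qPoch q q n / qPoch (-q ^ 2) q n * ((1 - q ^ (n + 1)) / (1 + q ^ (n + 2))) := by
      rw [qPoch.succ, qPoch.succ, div_mul_div_comm]
      ring
    calc Pbar q (n + 2)
        = ((q ^ (n + 1) - 1) * Pbar q (n + 1) + q ^ (n + 1) * (1 + q)) / (1 + q ^ (n + 2)) := rfl
      _ = qPoch q q (n + 1) / qPoch (-q ^ 2) q (n + 1) * pbarTerm q (n + 1) -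
          qPoch q q (n + 1) / qPoch (-q ^ 2) q (n + 1) *
            (pbarTerm q n - ∑ j ∈ Finset.range n, (-1) ^ j * pbarTerm q (n - 1 - j)) := by
        rw [Pbar_succ_eq_qPoch_div_mul hq n, qPoch_div_mul_pbarTerm hq, hc]
        ring
      _ = _ := by
        rw [← mul_sub, ← Finset.sum_range_succ_neg_one_pow_mul_sub, Nat.add_sub_cancel]

theorem Pbar_closed_form (k : ℕ) (hk : 1 ≤ k) (q : ℂ) (hq : ‖q‖ < 1) :
    Pbar q k = q ^ (k - 1) * (1 + q) / (1 + q ^ k) -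
      qPoch q q (k - 1) / qPoch (-q ^ 2) q (k - 1) *
        ∑ j ∈ Finset.range (k - 1), (-1 : ℂ) ^ j * q ^ (k - j - 2) *
          (qPoch (-q) q (k - j - 2) / qPoch q q (k - j - 2)) := by
  obtain ⟨n, rfl⟩ : ∃ n, k = n + 1 := ⟨k - 1, by omega⟩
  have hsum : ∑ j ∈ Finset.range n, (-1 : ℂ) ^ j * q ^ (n + 1 - j - 2) *
      (qPoch (-q) q (n + 1 - j - 2) / qPoch q q (n + 1 - j - 2)) =
      ∑ j ∈ Finset.range n, (-1) ^ j * pbarTerm q (n - 1 - j) :=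
    Finset.sum_congr rfl fun j _ => by
      rw [pbarTerm, mul_assoc, show n + 1 - j - 2 = n - 1 - j by omega]
  rw [Nat.add_sub_cancel, hsum, ← qPoch_div_mul_pbarTerm hq, ← mul_sub]
  exact Pbar_succ_eq_qPoch_div_mul hq n
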